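/- Let u: ℝⁿ → ℝ be a function with u|_Ω ∈ L¹(Ω) satisfying the nonlocal Neumann condition 𝒩_s u(x) = 0 for every x ∈ 𝒩, where 𝒩 ⊆ ℝⁿ \ closure(Ω) satisfies 𝒩 ∩ (ℝⁿ \ B_R) ≠ ∅ for every R > 0. Then for every sequence {x_j} ⊆ 𝒩 with |x_j| → ∞, the values u(x_j) converge to the average of u over Ω: lim_{j→∞} u(x_j) = (1/|Ω|) ∫_Ω u(x) dx. -/

import Mathlib

open MeasureTheory Filter Topology Bornology RealInnerProductSpace BoundedContinuousFunction

noncomputable section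

/-- Euclidean space ℝⁿ. -/
abbrev Eu (n : ℕ) : Type := EuclideanSpace ℝ (Fin n)

/-- The set `U = Ω ∪ 𝒩 ∪ (∂Ω ∩ closure 𝒩)`. -/
def USet (n : ℕ) (Ω N : Set (Eu n)) : Set (Eu n) := Ω ∪ N ∪ (frontier Ω ∩ closure N)

/-- The set `Q = ℝ²ⁿ \ (Ωᶜ × Ωᶜ)`. -/
def QSet (n : ℕ) (Ω : Set (Eu n)) : Set (Eu n × Eu n) := (Ωᶜ ×ˢ Ωᶜ)ᶜ

/-- Gagliardo seminorm squared `[u]_s² = ∬_Q |u(x)−u(y)|²/|x−y|^{n+2s} dx dy`. -/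
def gagSq (n : ℕ) (s : ℝ) (Ω : Set (Eu n)) (u : Eu n → ℝ) : ℝ :=
  ∫ p in QSet n Ω, (u p.1 - u p.2) ^ 2 / dist p.1 p.2 ^ ((n : ℝ) + 2 * s)

/-- `η(u)² = ∫_Ω |∇u|² dx + [u]_s²`. -/
def etaSq (n : ℕ) (s : ℝ) (Ω : Set (Eu n)) (u : Eu n → ℝ) : ℝ :=
  (∫ x in Ω, ‖gradient u x‖ ^ 2) + gagSq n s Ω u

/-- Membership in `H¹(ℝⁿ)` : `u ∈ L²` and `∇u ∈ L²`. -/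
def MemH1 (n : ℕ) (u : Eu n → ℝ) : Prop :=
  MemLp u 2 (volume : Measure (Eu n)) ∧
    MemLp (fun x => ‖gradient u x‖) 2 (volume : Measure (Eu n))

/-- Membership in `H¹₀(U)` : approximation in the `H¹` norm by smooth functions
compactly supported in `U`. -/
def MemH10 (n : ℕ) (U : Set (Eu n)) (u : Eu n → ℝ) : Prop :=
  ∃ φ : ℕ → Eu n → ℝ,
    (∀ k, ContDiff ℝ (⊤ : ℕ∞) (φ k) ∧ HasCompactSupport (φ k) ∧ tsupport (φ k) ⊆ U) ∧
    Tendsto (fun k => ∫ x : Eu n,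
        ((u x - φ k x) ^ 2 + ‖gradient u x - gradient (φ k) x‖ ^ 2)) atTop (𝓝 0)

/-- The space `𝒳 = 𝒳^{1,2}_𝒟(U)` : `u ∈ H¹(ℝⁿ)`, `u|_U ∈ H¹₀(U)`, `u = 0` a.e. in `Uᶜ`. -/
def MemX (n : ℕ) (Ω N : Set (Eu n)) (u : Eu n → ℝ) : Prop :=
  MemH1 n u ∧ MemH10 n (USet n Ω N) u ∧
    (∀ᵐ x ∂(volume : Measure (Eu n)), x ∉ USet n Ω N → u x = 0)

/-- The bilinear form
`B(u,v) = ∫_Ω ∇u·∇v dx + ∬_Q (u(x)−u(y))(v(x)−v(y))/|x−y|^{n+2s} dx dy`. -/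
def bform (n : ℕ) (s : ℝ) (Ω : Set (Eu n)) (u v : Eu n → ℝ) : ℝ :=
  (∫ x in Ω, ⟪gradient u x, gradient v x⟫) +
    ∫ p in QSet n Ω, (u p.1 - u p.2) * (v p.1 - v p.2) / dist p.1 p.2 ^ ((n : ℝ) + 2 * s)

/-- `(lam, u)` is an eigenpair of the mixed problem `(P_λ)` : `u ∈ 𝒳 \ {0}` and the weak
formulation holds against every test function in `𝒳`. -/
def IsEigenpair (n : ℕ) (s : ℝ) (Ω N : Set (Eu n)) (lam : ℝ) (u : Eu n → ℝ) : Prop :=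
  MemX n Ω N u ∧ ¬ (u =ᵐ[(volume : Measure (Eu n))] 0) ∧
    ∀ φ : Eu n → ℝ, MemX n Ω N φ → bform n s Ω u φ = lam * ∫ x in Ω, u x * φ x

/-- The first eigenvalue `λ₁(𝒟) = inf { η(u)²/∫_Ω u² : u ∈ 𝒳 \ {0} }`. -/
def lambda1 (n : ℕ) (s : ℝ) (Ω N : Set (Eu n)) : ℝ :=
  sInf {r : ℝ | ∃ u : Eu n → ℝ, MemX n Ω N u ∧ ¬ (u =ᵐ[(volume : Measure (Eu n))] 0) ∧
    r = etaSq n s Ω u / ∫ x in Ω, (u x) ^ 2}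

/-- The first eigenvalue of the pure Dirichlet problem: infimum of the Rayleigh quotient over
nonzero `u ∈ H¹(ℝⁿ)` vanishing a.e. outside `Ω`. -/
def lambda1Dir (n : ℕ) (s : ℝ) (Ω : Set (Eu n)) : ℝ :=
  sInf {r : ℝ | ∃ u : Eu n → ℝ, MemH1 n u ∧
    (∀ᵐ x ∂(volume : Measure (Eu n)), x ∉ Ω → u x = 0) ∧
    ¬ (u =ᵐ[(volume : Measure (Eu n))] 0) ∧
    r = etaSq n s Ω u / ∫ x in Ω, (u x) ^ 2}

/-- The standing assumptions on the configuration `(Ω, 𝒟, 𝒩)`. -/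
structure Standing (n : ℕ) (s : ℝ) (Ω D N : Set (Eu n)) : Prop where
  hn : 0 < n
  hs0 : 0 < s
  hs1 : s < 1
  hΩopen : IsOpen Ω
  hΩne : Ω.Nonempty
  hDopen : IsOpen D
  hNopen : IsOpen N
  hDsub : D ⊆ (closure Ω)ᶜ
  hNsub : N ⊆ (closure Ω)ᶜ
  hdisj : Disjoint D N
  hclos : closure (D ∪ N) = Ωᶜ
  hbdd : IsBounded (Ω ∪ N)

/-- The standing assumptions for the sequences of configurations in Section 4:
`𝒟, 𝒩` disjoint open subsets of `ℝⁿ \ closure Ω`, `|ℝⁿ \ (Ω ∪ 𝒟 ∪ 𝒩)| = 0`,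
and `Ω ∪ 𝒩 ∪ (∂Ω ∩ closure 𝒩)` bounded. -/
structure Standing2 (n : ℕ) (Ω D N : Set (Eu n)) : Prop where
  hDopen : IsOpen D
  hNopen : IsOpen N
  hDsub : D ⊆ (closure Ω)ᶜ
  hNsub : N ⊆ (closure Ω)ᶜ
  hdisj : Disjoint D N
  hmeas : volume ((Ω ∪ D ∪ N)ᶜ) = 0
  hbdd : IsBounded (USet n Ω N)

/-- `Ω` is admissible: it is open and near every boundary point, after choosing a unit
direction `ν`, it is the region above the graph of a `C^{1,1}` function (i.e. `C¹` with
Lipschitz derivative). -/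
def IsAdmissible (n : ℕ) (Ω : Set (Eu n)) : Prop :=
  IsOpen Ω ∧ ∀ x ∈ frontier Ω, ∃ r > (0 : ℝ), ∃ ν : Eu n, ‖ν‖ = 1 ∧
    ∃ g : Eu n → ℝ, ContDiff ℝ 1 g ∧ (∃ K : NNReal, LipschitzWith K (fderiv ℝ g)) ∧
      ∀ y ∈ Metric.ball x r, (y ∈ Ω ↔ g (y - ⟪y, ν⟫ • ν) < ⟪y, ν⟫)

/-- The normalizing constant `C_{n,s} = (∫_{ℝⁿ} (1 − cos ζ₁)/|ζ|^{n+2s} dζ)⁻¹`. -/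
def Cns (n : ℕ) (s : ℝ) : ℝ :=
  if h : 0 < n then
    (∫ ζ : Eu n, (1 - Real.cos (ζ ⟨0, h⟩)) / ‖ζ‖ ^ ((n : ℝ) + 2 * s))⁻¹
  else 0

/-- The truncated integral defining the principal value of the fractional Laplacian. -/
def truncInt (n : ℕ) (s : ℝ) (u : Eu n → ℝ) (x : Eu n) (ε : ℝ) : ℝ :=
  ∫ y in {y : Eu n | ε ≤ dist x y}, (u x - u y) / dist x y ^ ((n : ℝ) + 2 * s)

/-- `(−Δ)^s u (x) = L` in the principal value sense. -/
def HasFracLap (n : ℕ) (s : ℝ) (u : Eu n → ℝ) (x : Eu n) (L : ℝ) : Prop :=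
  Tendsto (fun ε => Cns n s * truncInt n s u x ε) (𝓝[>] (0 : ℝ)) (𝓝 L)

/-- The (classical, pointwise) Laplacian `Δu(x) = ∑ i ∂²u/∂xᵢ²`. -/
def lap (n : ℕ) (u : Eu n → ℝ) (x : Eu n) : ℝ :=
  ∑ i : Fin n, fderiv ℝ (fun y => fderiv ℝ u y (EuclideanSpace.single i 1)) x
    (EuclideanSpace.single i 1)

/-- The nonlocal normal derivative
`𝒩_s u(x) = C_{n,s} ∫_Ω (u(x) − u(y))/|x−y|^{n+2s} dy`. -/
def Nder (n : ℕ) (s : ℝ) (Ω : Set (Eu n)) (u : Eu n → ℝ) (x : Eu n) : ℝ :=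
  Cns n s * ∫ y in Ω, (u x - u y) / dist x y ^ ((n : ℝ) + 2 * s)

/-- `ν` is an outward unit normal direction to `Ω` at the boundary point `x`. -/
def IsOutwardNormal (n : ℕ) (Ω : Set (Eu n)) (x ν : Eu n) : Prop :=
  ‖ν‖ = 1 ∧ x ∈ frontier Ω ∧
    (∀ᶠ t in 𝓝[>] (0 : ℝ), x + t • ν ∉ closure Ω) ∧
    (∀ᶠ t in 𝓝[>] (0 : ℝ), x - t • ν ∈ Ω)

/-- Membership in the Dirichlet space: `u ∈ H¹(ℝⁿ)` with `u = 0` a.e. outside `Ω`. -/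
def MemDir (n : ℕ) (Ω : Set (Eu n)) (u : Eu n → ℝ) : Prop :=
  MemH1 n u ∧ (∀ᵐ x ∂(volume : Measure (Eu n)), x ∉ Ω → u x = 0)

/-- `(lam, u)` is an eigenpair of the pure Dirichlet problem for `𝓛` in `Ω`. -/
def IsDirEigenpair (n : ℕ) (s : ℝ) (Ω : Set (Eu n)) (lam : ℝ) (u : Eu n → ℝ) : Prop :=
  MemDir n Ω u ∧ ¬ (u =ᵐ[(volume : Measure (Eu n))] 0) ∧
    ∀ φ : Eu n → ℝ, MemDir n Ω φ → bform n s Ω u φ = lam * ∫ x in Ω, u x * φ x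


section AuxStatement14

open Metric Set
open scoped ENNReal

lemma my_measurable_rpow_const {β : Type*} [MeasurableSpace β] {f : β → ℝ} (hf : Measurable f)
    (e : ℝ) : Measurable fun x => f x ^ e :=
  (measurable_of_continuousOn_compl_singleton 0 (fun x hx =>
    (Real.continuousAt_rpow_const x e (Or.inl hx)).continuousWithinAt)).comp hf

lemma eu_coord_sq_le {n : ℕ} (ζ : Eu n) (i : Fin n) : (ζ i) ^ 2 ≤ ‖ζ‖ ^ 2 := by
  rw [EuclideanSpace.norm_eq, Real.sq_sqrt (by positivity)]
  calc (ζ i) ^ 2 = ‖ζ i‖ ^ 2 := by rw [Real.norm_eq_abs, sq_abs]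
    _ ≤ ∑ j, ‖ζ j‖ ^ 2 := Finset.single_le_sum (f := fun j => ‖ζ j‖ ^ 2)
        (fun j _ => by positivity) (Finset.mem_univ i)

lemma integrableOn_norm_rpow_ball {n : ℕ} {e : ℝ} (he : -(n : ℝ) < e) :
    IntegrableOn (fun x : Eu n => ‖x‖ ^ e) (Metric.ball (0 : Eu n) 1) volume := by
  have hmeas : Measurable fun x : Eu n => ‖x‖ ^ e := my_measurable_rpow_const measurable_norm e
  rcases le_or_gt 0 e with he0 | he0
  · refine Integrable.mono'
      (integrableOn_const measure_ball_lt_top.ne :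
        IntegrableOn (fun _ : Eu n => (1:ℝ)) (Metric.ball (0 : Eu n) 1) volume)
      hmeas.aestronglyMeasurable ?_
    filter_upwards [ae_restrict_mem measurableSet_ball] with y hy
    rw [Real.norm_eq_abs, abs_of_nonneg (Real.rpow_nonneg (norm_nonneg _) _)]
    exact Real.rpow_le_one (norm_nonneg _) (mem_ball_zero_iff.1 hy).le he0
  · have hne : e ≠ 0 := he0.ne
    refine ⟨hmeas.aestronglyMeasurable, ?_⟩
    have hnn : 0 ≤ᵐ[volume.restrict (Metric.ball (0 : Eu n) 1)] fun x : Eu n => ‖x‖ ^ e :=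
      Eventually.of_forall fun x => Real.rpow_nonneg (norm_nonneg _) _
    rw [hasFiniteIntegral_iff_ofReal hnn,
      lintegral_eq_lintegral_meas_le _ hnn hmeas.aemeasurable]
    set μ := volume.restrict (Metric.ball (0 : Eu n) 1) with hμ
    have hsub : ∀ t : ℝ, 0 < t →
        {a : Eu n | t ≤ ‖a‖ ^ e} ⊆ Metric.closedBall 0 (t ^ e⁻¹) := by
      intro t ht a ha
      simp only [Set.mem_setOf_eq] at ha
      have ha0 : a ≠ 0 := by
        rintro rfl
        rw [norm_zero, Real.zero_rpow hne] at ha; linarith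
      have h1 : (‖a‖ ^ e) ^ e⁻¹ ≤ t ^ e⁻¹ :=
        Real.rpow_le_rpow_of_nonpos ht ha (inv_nonpos.2 he0.le)
      rwa [← Real.rpow_mul (norm_nonneg _), mul_inv_cancel₀ hne, Real.rpow_one,
        ← dist_zero_right, ← Metric.mem_closedBall] at h1
    have hlt : (n : ℝ) * e⁻¹ < -1 := by
      rw [← div_eq_mul_inv, div_lt_iff_of_neg he0]
      linarith
    calc ∫⁻ t in Ioi (0:ℝ), μ {a : Eu n | t ≤ ‖a‖ ^ e}
        ≤ ∫⁻ t in Ioc (0:ℝ) 1 ∪ Ioi 1, μ {a : Eu n | t ≤ ‖a‖ ^ e} :=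
          lintegral_mono_set Ioi_subset_Ioc_union_Ioi
      _ ≤ (∫⁻ t in Ioc (0:ℝ) 1, μ {a : Eu n | t ≤ ‖a‖ ^ e})
            + ∫⁻ t in Ioi (1:ℝ), μ {a : Eu n | t ≤ ‖a‖ ^ e} :=
          lintegral_union_le _ _ _
      _ < ∞ := by
          refine ENNReal.add_lt_top.2 ⟨?_, ?_⟩
          · calc (∫⁻ t in Ioc (0:ℝ) 1, μ {a : Eu n | t ≤ ‖a‖ ^ e})
                ≤ ∫⁻ _t in Ioc (0:ℝ) 1, volume (Metric.ball (0 : Eu n) 1) := by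
                  refine setLIntegral_mono' measurableSet_Ioc fun t ht => ?_
                  refine (measure_mono (Set.subset_univ _)).trans_eq ?_
                  rw [hμ, Measure.restrict_apply_univ]
              _ = volume (Metric.ball (0 : Eu n) 1) * volume (Ioc (0:ℝ) 1) := by
                  rw [setLIntegral_const]
              _ < ∞ := ENNReal.mul_lt_top measure_ball_lt_top measure_Ioc_lt_top
          · calc (∫⁻ t in Ioi (1:ℝ), μ {a : Eu n | t ≤ ‖a‖ ^ e})
                ≤ ∫⁻ t in Ioi (1:ℝ),
                    ENNReal.ofReal (t ^ ((n:ℝ) * e⁻¹)) * volume (Metric.ball (0 : Eu n) 1) := by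
                  refine setLIntegral_mono' measurableSet_Ioi fun t ht => ?_
                  have ht0 : (0:ℝ) < t := lt_trans zero_lt_one ht
                  have hle : μ {a : Eu n | t ≤ ‖a‖ ^ e}
                      ≤ volume (Metric.closedBall (0 : Eu n) (t ^ e⁻¹)) := by
                    rw [hμ]
                    exact (Measure.restrict_apply_le _ _).trans (measure_mono (hsub t ht0))
                  refine hle.trans_eq ?_
                  rw [Measure.addHaar_closedBall _ _ (Real.rpow_nonneg ht0.le _)]
                  congr 2
                  rw [finrank_euclideanSpace_fin, ← Real.rpow_natCast (t ^ e⁻¹) n,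
                    ← Real.rpow_mul ht0.le, mul_comm]
              _ = (∫⁻ t in Ioi (1:ℝ), ENNReal.ofReal (t ^ ((n:ℝ) * e⁻¹)))
                    * volume (Metric.ball (0 : Eu n) 1) :=
                  lintegral_mul_const' _ _ measure_ball_lt_top.ne
              _ < ∞ := ENNReal.mul_lt_top
                  (integrableOn_Ioi_rpow_of_lt hlt zero_lt_one).setLIntegral_lt_top
                  measure_ball_lt_top

lemma cns_kernel_integrable {n : ℕ} {s : ℝ} (hs0 : 0 < s) (hs1 : s < 1) (i : Fin n) :
    Integrable (fun ζ : Eu n => (1 - Real.cos (ζ i)) / ‖ζ‖ ^ ((n : ℝ) + 2 * s)) volume := by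
  set α : ℝ := (n : ℝ) + 2 * s with hαdef
  have hα0 : 0 < α := by positivity
  have hmeas : Measurable fun ζ : Eu n => (1 - Real.cos (ζ i)) / ‖ζ‖ ^ α :=
    (measurable_const.sub ((EuclideanSpace.proj i : Eu n →L[ℝ] ℝ).continuous.measurable.cos)).div
      (my_measurable_rpow_const measurable_norm α)
  have hnonneg : ∀ ζ : Eu n, 0 ≤ (1 - Real.cos (ζ i)) / ‖ζ‖ ^ α := fun ζ =>
    div_nonneg (by linarith [Real.cos_le_one (ζ i)]) (Real.rpow_nonneg (norm_nonneg _) _)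
  rw [← integrableOn_univ, ← Set.union_compl_self (Metric.ball (0 : Eu n) 1)]
  refine IntegrableOn.union ?_ ?_
  · refine Integrable.mono'
      ((integrableOn_norm_rpow_ball (n := n) (e := 2 - α) (by push_cast; linarith)).const_mul
        (1/2 : ℝ)) hmeas.aestronglyMeasurable (Eventually.of_forall fun ζ => ?_)
    rw [Real.norm_eq_abs, abs_of_nonneg (hnonneg ζ)]
    rcases eq_or_ne ζ 0 with rfl | hζ
    · have : ((0 : Eu n)) i = 0 := rfl
      rw [this, Real.cos_zero, sub_self, zero_div]
      positivity
    · have hζ0 : 0 < ‖ζ‖ := norm_pos_iff.2 hζ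
      have hsq : ‖ζ‖ ^ (2:ℝ) = ‖ζ‖ ^ 2 := by
        rw [show (2:ℝ) = ((2:ℕ):ℝ) by norm_num, Real.rpow_natCast]
      have h1 : 1 - Real.cos (ζ i) ≤ ‖ζ‖ ^ (2:ℝ) / 2 := by
        have h2 := Real.one_sub_sq_div_two_le_cos (x := ζ i)
        have h3 := eu_coord_sq_le ζ i
        rw [hsq]
        linarith
      calc (1 - Real.cos (ζ i)) / ‖ζ‖ ^ α ≤ (‖ζ‖ ^ (2:ℝ) / 2) / ‖ζ‖ ^ α := by
            exact div_le_div_of_nonneg_right h1 (Real.rpow_nonneg (norm_nonneg _) _)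
        _ = 1/2 * ‖ζ‖ ^ (2 - α) := by
            rw [Real.rpow_sub hζ0]; ring
  · have hfin : ((Module.finrank ℝ (Eu n)) : ℝ) < α := by
      rw [finrank_euclideanSpace_fin]
      simp only [hαdef]
      linarith
    refine Integrable.mono'
      (((integrable_one_add_norm (E := Eu n) (μ := volume) hfin).const_mul
        (2 * 2 ^ α)).integrableOn) hmeas.aestronglyMeasurable ?_
    filter_upwards [ae_restrict_mem measurableSet_ball.compl] with ζ hζ
    have h1 : (1:ℝ) ≤ ‖ζ‖ := by
      have := hζ
      simp only [Set.mem_compl_iff, Metric.mem_ball, dist_zero_right, not_lt] at this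
      exact this
    have hζ0 : (0:ℝ) < ‖ζ‖ := lt_of_lt_of_le zero_lt_one h1
    rw [Real.norm_eq_abs, abs_of_nonneg (hnonneg ζ)]
    have key : ‖ζ‖ ^ (-α) ≤ 2 ^ α * (1 + ‖ζ‖) ^ (-α) := by
      have hhalf : (1 + ‖ζ‖)/2 ≤ ‖ζ‖ := by linarith
      calc ‖ζ‖ ^ (-α) ≤ ((1 + ‖ζ‖)/2) ^ (-α) :=
            Real.rpow_le_rpow_of_nonpos (by linarith) hhalf (neg_nonpos.2 hα0.le)
        _ = (1 + ‖ζ‖) ^ (-α) / 2 ^ (-α) := Real.div_rpow (by linarith) (by norm_num : (0:ℝ) ≤ 2) _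
        _ = 2 ^ α * (1 + ‖ζ‖) ^ (-α) := by
            rw [Real.rpow_neg (by norm_num : (0:ℝ) ≤ 2), div_inv_eq_mul, mul_comm]
    calc (1 - Real.cos (ζ i)) / ‖ζ‖ ^ α ≤ 2 / ‖ζ‖ ^ α :=
          div_le_div_of_nonneg_right (by linarith [Real.neg_one_le_cos (ζ i)])
            (Real.rpow_nonneg (norm_nonneg _) _)
      _ = 2 * ‖ζ‖ ^ (-α) := by rw [Real.rpow_neg hζ0.le]; ring
      _ ≤ 2 * (2 ^ α * (1 + ‖ζ‖) ^ (-α)) := by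
          exact mul_le_mul_of_nonneg_left key (by norm_num)
      _ = 2 * 2 ^ α * (1 + ‖ζ‖) ^ (-α) := by ring

lemma cns_pos {n : ℕ} (hn : 0 < n) {s : ℝ} (hs0 : 0 < s) (hs1 : s < 1) : 0 < Cns n s := by
  rw [Cns, dif_pos hn]
  refine inv_pos.2 ?_
  set i : Fin n := ⟨0, hn⟩
  have hnonneg : ∀ ζ : Eu n, 0 ≤ (1 - Real.cos (ζ i)) / ‖ζ‖ ^ ((n:ℝ) + 2 * s) := fun ζ =>
    div_nonneg (by linarith [Real.cos_le_one (ζ i)]) (Real.rpow_nonneg (norm_nonneg _) _)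
  refine (integral_pos_iff_support_of_nonneg hnonneg (cns_kernel_integrable hs0 hs1 i)).2 ?_
  have hS : IsOpen {ζ : Eu n | ζ i ∈ Set.Ioo (0:ℝ) 1} :=
    isOpen_Ioo.preimage (EuclideanSpace.proj i : Eu n →L[ℝ] ℝ).continuous
  have hSne : {ζ : Eu n | ζ i ∈ Set.Ioo (0:ℝ) 1}.Nonempty :=
    ⟨EuclideanSpace.single i (1/2 : ℝ), by norm_num [EuclideanSpace.single_apply]⟩
  refine lt_of_lt_of_le (hS.measure_pos volume hSne) (measure_mono ?_)
  rintro ζ ⟨h0, h1⟩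
  have hcos : Real.cos (ζ i) < 1 := by
    have hπ := Real.pi_gt_three
    have := Real.cos_lt_cos_of_nonneg_of_le_pi le_rfl (by linarith : ζ i ≤ Real.pi) h0
    rwa [Real.cos_zero] at this
  have hζ0 : (0:ℝ) < ‖ζ‖ := by
    refine norm_pos_iff.2 fun h => ?_
    rw [h] at h0
    exact lt_irrefl 0 h0
  exact ne_of_gt (div_pos (by linarith) (Real.rpow_pos_of_pos hζ0 _))

lemma tendsto_weight {n : ℕ} {Ω : Set (Eu n)} (hΩm : MeasurableSet Ω) (hΩb : IsBounded Ω)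
    {α : ℝ} (hα : 0 ≤ α) {g : Eu n → ℝ} (hg : IntegrableOn g Ω volume)
    {x : ℕ → Eu n} (hxinf : Tendsto (fun j => ‖x j‖) atTop atTop) :
    Tendsto (fun j => ∫ y in Ω, g y * (‖x j‖ / dist (x j) y) ^ α) atTop
      (𝓝 (∫ y in Ω, g y)) := by
  obtain ⟨M, hM⟩ := hΩb.subset_closedBall 0
  refine tendsto_integral_filter_of_dominated_convergence (μ := volume.restrict Ω)
    (bound := fun y => 2 ^ α * ‖g y‖) ?_ ?_ ?_ ?_
  · exact Eventually.of_forall fun j =>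
      hg.aestronglyMeasurable.mul
        (my_measurable_rpow_const (measurable_const.div (measurable_const.dist measurable_id)) α).aestronglyMeasurable
  · filter_upwards [hxinf.eventually_ge_atTop (2*M+1)] with j hj
    filter_upwards [ae_restrict_mem hΩm] with y hy
    have hyM : ‖y‖ ≤ M := by
      have := hM hy
      rwa [Metric.mem_closedBall, dist_zero_right] at this
    have hM0 : 0 ≤ M := le_trans (norm_nonneg y) hyM
    have hd : ‖x j‖ / 2 ≤ dist (x j) y := by
      have h2 : ‖x j‖ - ‖y‖ ≤ ‖x j - y‖ := norm_sub_norm_le _ _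
      rw [dist_eq_norm]
      linarith
    have hdpos : 0 < dist (x j) y := by linarith
    have hr2 : ‖x j‖ / dist (x j) y ≤ 2 := by
      rw [div_le_iff₀ hdpos]; linarith
    have hr0 : 0 ≤ ‖x j‖ / dist (x j) y := div_nonneg (norm_nonneg _) dist_nonneg
    rw [norm_mul, Real.norm_eq_abs ((‖x j‖ / dist (x j) y) ^ α),
      abs_of_nonneg (Real.rpow_nonneg hr0 _)]
    calc ‖g y‖ * (‖x j‖ / dist (x j) y) ^ α ≤ ‖g y‖ * 2 ^ α :=
          mul_le_mul_of_nonneg_left (Real.rpow_le_rpow hr0 hr2 hα) (norm_nonneg _)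
      _ = 2 ^ α * ‖g y‖ := mul_comm _ _
  · exact hg.norm.const_mul _
  · refine Eventually.of_forall fun y => ?_
    have h2 : Tendsto (fun j => (dist (x j) y - ‖x j‖) / ‖x j‖) atTop (𝓝 0) := by
      refine squeeze_zero_norm' (a := fun j => ‖y‖ / ‖x j‖) ?_
        ((tendsto_const_nhds (x := ‖y‖)).div_atTop hxinf)
      filter_upwards [hxinf.eventually_gt_atTop 0] with j hj
      rw [Real.norm_eq_abs, abs_div, abs_of_pos hj]
      have habs : |dist (x j) y - ‖x j‖| ≤ ‖y‖ := by
        calc |dist (x j) y - ‖x j‖| = |‖x j - y‖ - ‖x j‖| := by rw [dist_eq_norm]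
          _ ≤ ‖(x j - y) - x j‖ := abs_norm_sub_norm_le _ _
          _ = ‖y‖ := by rw [sub_sub_cancel_left, norm_neg]
      exact div_le_div_of_nonneg_right habs hj.le
    have h1 : Tendsto (fun j => dist (x j) y / ‖x j‖) atTop (𝓝 1) := by
      have hadd : Tendsto (fun j => 1 + (dist (x j) y - ‖x j‖) / ‖x j‖) atTop (𝓝 1) := by
        simpa using (tendsto_const_nhds (x := (1:ℝ)) (f := atTop)).add h2
      refine hadd.congr' ?_
      filter_upwards [hxinf.eventually_gt_atTop 0] with j hj
      field_simp
      ring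
    have hr : Tendsto (fun j => ‖x j‖ / dist (x j) y) atTop (𝓝 1) := by
      have := h1.inv₀ one_ne_zero
      simpa [inv_div] using this
    have := hr.rpow_const (Or.inr hα)
    rw [Real.one_rpow] at this
    simpa using (tendsto_const_nhds (x := g y) (f := atTop)).mul this

end AuxStatement14

/-- If `u` (integrable on `Ω`) satisfies the nonlocal Neumann condition
`𝒩_s u = 0` on a set `𝒩 ⊆ ℝⁿ \ closure Ω` reaching arbitrarily far from the origin, then along
any sequence `{x_j} ⊆ 𝒩` with `|x_j| → ∞` the values `u(x_j)` converge to the average of `u`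
over `Ω`. -/
theorem statement_14 (n : ℕ) (s : ℝ) (hn : 0 < n) (hs0 : 0 < s) (hs1 : s < 1)
    (Ω : Set (Eu n)) (hΩo : IsOpen Ω) (hΩne : Ω.Nonempty) (hΩb : IsBounded Ω)
    (N : Set (Eu n)) (hN : N ⊆ (closure Ω)ᶜ)
    (hNfar : ∀ R > (0 : ℝ), (N ∩ (Metric.ball (0 : Eu n) R)ᶜ).Nonempty)
    (u : Eu n → ℝ) (hui : IntegrableOn u Ω (volume : Measure (Eu n)))
    (hNeu : ∀ x ∈ N, Nder n s Ω u x = 0)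
    (x : ℕ → Eu n) (hx : ∀ j, x j ∈ N)
    (hxinf : Tendsto (fun j => ‖x j‖) atTop atTop) :
    Tendsto (fun j => u (x j)) atTop
      (𝓝 ((volume Ω).toReal⁻¹ * ∫ y in Ω, u y)) := by
  classical
  set α : ℝ := (n : ℝ) + 2 * s with hαdef
  have hα0 : 0 < α := by positivity
  have hΩm : MeasurableSet Ω := hΩo.measurableSet
  have hΩfin : volume Ω < ⊤ := hΩb.measure_lt_top
  have hb : (0:ℝ) < (volume Ω).toReal :=
    ENNReal.toReal_pos (hΩo.measure_pos volume hΩne).ne' hΩfin.ne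
  have hC : (0:ℝ) < Cns n s := cns_pos hn hs0 hs1
  set A : ℕ → ℝ := fun j => ∫ y in Ω, u y * (‖x j‖ / dist (x j) y) ^ α with hA
  set B : ℕ → ℝ := fun j => ∫ y in Ω, (‖x j‖ / dist (x j) y) ^ α with hB
  have hAt : Tendsto A atTop (𝓝 (∫ y in Ω, u y)) := tendsto_weight hΩm hΩb hα0.le hui hxinf
  have hBt : Tendsto B atTop (𝓝 ((volume Ω).toReal)) := by
    have h1 := tendsto_weight (g := fun _ => (1:ℝ)) hΩm hΩb hα0.le
      (integrableOn_const hΩfin.ne) hxinf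
    simp only [one_mul] at h1
    have h2 : ∫ y in Ω, (1:ℝ) = (volume Ω).toReal := by
      rw [integral_const, measureReal_restrict_apply_univ, smul_eq_mul, mul_one]; rfl
    rw [h2] at h1
    exact h1
  have key : ∀ j, u (x j) * B j = A j := by
    intro j
    have hxΩ : x j ∉ closure Ω := hN (hx j)
    have hδ : 0 < Metric.infDist (x j) Ω := by
      rw [← Metric.infDist_closure]
      exact (isClosed_closure.notMem_iff_infDist_pos hΩne.closure).1 hxΩ
    set δ := Metric.infDist (x j) Ω with hδdef
    have hdist : ∀ y ∈ Ω, δ ≤ dist (x j) y := fun y hy => Metric.infDist_le_dist_of_mem hy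
    have hmeasd : Measurable fun y : Eu n => (dist (x j) y ^ α)⁻¹ :=
      (my_measurable_rpow_const (measurable_const.dist measurable_id) α).inv
    have h1 : IntegrableOn (fun y : Eu n => (dist (x j) y ^ α)⁻¹) Ω volume := by
      refine Integrable.mono'
        (integrableOn_const hΩfin.ne : IntegrableOn (fun _ => (δ ^ α)⁻¹) Ω volume)
        hmeasd.aestronglyMeasurable ?_
      filter_upwards [ae_restrict_mem hΩm] with y hy
      rw [Real.norm_eq_abs, abs_of_nonneg (inv_nonneg.2 (Real.rpow_nonneg dist_nonneg _))]
      exact inv_anti₀ (Real.rpow_pos_of_pos hδ _)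
        (Real.rpow_le_rpow hδ.le (hdist y hy) hα0.le)
    have h2 : IntegrableOn (fun y : Eu n => u y * (dist (x j) y ^ α)⁻¹) Ω volume := by
      refine Integrable.mono' (hui.norm.const_mul ((δ ^ α)⁻¹))
        (hui.aestronglyMeasurable.mul hmeasd.aestronglyMeasurable) ?_
      filter_upwards [ae_restrict_mem hΩm] with y hy
      rw [norm_mul, Real.norm_eq_abs ((dist (x j) y ^ α)⁻¹),
        abs_of_nonneg (inv_nonneg.2 (Real.rpow_nonneg dist_nonneg _))]
      rw [mul_comm ((δ ^ α)⁻¹) ‖u y‖]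
      exact mul_le_mul_of_nonneg_left
        (inv_anti₀ (Real.rpow_pos_of_pos hδ _)
          (Real.rpow_le_rpow hδ.le (hdist y hy) hα0.le)) (norm_nonneg _)
    have h0 : ∫ y in Ω, (u (x j) - u y) * (dist (x j) y ^ α)⁻¹ = 0 := by
      have hne := hNeu (x j) (hx j)
      rw [Nder] at hne
      have h3 := (mul_eq_zero.1 hne).resolve_left hC.ne'
      rw [← hαdef] at h3
      simpa only [div_eq_mul_inv] using h3
    have hsplit : ∫ y in Ω, (u (x j) - u y) * (dist (x j) y ^ α)⁻¹
        = u (x j) * (∫ y in Ω, (dist (x j) y ^ α)⁻¹)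
          - ∫ y in Ω, u y * (dist (x j) y ^ α)⁻¹ := by
      simp_rw [sub_mul]
      rw [integral_sub (h1.const_mul _) h2, integral_const_mul]
    have hIJ : u (x j) * (∫ y in Ω, (dist (x j) y ^ α)⁻¹)
        = ∫ y in Ω, u y * (dist (x j) y ^ α)⁻¹ := by
      have h4 := h0
      rw [hsplit] at h4
      linarith
    have hBrw : B j = ‖x j‖ ^ α * ∫ y in Ω, (dist (x j) y ^ α)⁻¹ := by
      rw [hB, ← integral_const_mul]
      refine integral_congr_ae (Eventually.of_forall fun y => ?_)
      show (‖x j‖ / dist (x j) y) ^ α = ‖x j‖ ^ α * (dist (x j) y ^ α)⁻¹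
      rw [Real.div_rpow (norm_nonneg _) dist_nonneg, div_eq_mul_inv]
    have hArw : A j = ‖x j‖ ^ α * ∫ y in Ω, u y * (dist (x j) y ^ α)⁻¹ := by
      rw [hA, ← integral_const_mul]
      refine integral_congr_ae (Eventually.of_forall fun y => ?_)
      show u y * (‖x j‖ / dist (x j) y) ^ α = ‖x j‖ ^ α * (u y * (dist (x j) y ^ α)⁻¹)
      rw [Real.div_rpow (norm_nonneg _) dist_nonneg, div_eq_mul_inv]
      ring
    rw [hArw, hBrw, ← hIJ]
    ring
  have hfin : Tendsto (fun j => A j / B j) atTop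
      (𝓝 ((∫ y in Ω, u y) / (volume Ω).toReal)) := hAt.div hBt hb.ne'
  have heq : ∀ᶠ j in atTop, A j / B j = u (x j) := by
    filter_upwards [hBt.eventually (eventually_gt_nhds hb)] with j hj
    rw [div_eq_iff hj.ne', key j]
  rw [inv_mul_eq_div]
  exact hfin.congr' heq
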